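/- For every ε > 0, the link of the Cartan umbrella at the origin, namely the set {(x,y,z) ∈ ℝ³ | x² = z·y² ∧ x² + y² + z² = ε²} with its subspace topology, is homeomorphic to the disjoint union of a figure eight and a point, realized as the subspace F ∪ {(5,0)} of ℝ², where F = {(a,b) ∈ ℝ² | (a−1)² + b² = 1 ∨ (a+1)² + b² = 1} is the union of two unit circles tangent at the origin. -/

import Mathlib

/-!
Below the plane `z = 0` the equations force `x = y = 0`, so the link is the isolated point
`(0, 0, -ε)` together with the curve `x² = z y²`, `y² (1 + z) = ε² - z²`, `0 ≤ z ≤ ε`.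
Rescaling `y` and `x` by suitable positive functions of `z` gives a point `(a, b)` with
`|a| = 2 (ε - z) / ε` and `b² = 4 z (ε - z) / ε²`, hence `a² + b² = 2 |a|`, which is the equation
of the two tangent circles; conversely `z`, then `y` and `x`, are recovered from `(a, b)`.
Sending the isolated point to `(5, 0)`, this is a continuous bijection from a compact space onto
a Hausdorff one, hence a homeomorphism.
-/

open Set

noncomputable def Set.InjOn.homeomorphImageOfIsCompact {X Y : Type*} [TopologicalSpace X]
    [TopologicalSpace Y] [T2Space Y] {f : X → Y} {s : Set X} (hinj : InjOn f s)
    (hs : IsCompact s) (hf : ContinuousOn f s) : s ≃ₜ f '' s :=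
  haveI := isCompact_iff_compactSpace.mp hs
  Continuous.homeoOfEquivCompactToT2 (f := Equiv.Set.imageOfInjOn f s hinj)
    ((continuousOn_iff_continuous_domRestrict.mp hf).subtype_mk _)

def cartanLink (ε : ℝ) : Set (ℝ × ℝ × ℝ) :=
  {p | p.1 ^ 2 = p.2.2 * p.2.1 ^ 2 ∧ p.1 ^ 2 + p.2.1 ^ 2 + p.2.2 ^ 2 = ε ^ 2}

def cartanLinkCurve (ε : ℝ) : Set (ℝ × ℝ × ℝ) :=
  {p | 0 ≤ p.2.2 ∧ p.1 ^ 2 = p.2.2 * p.2.1 ^ 2 ∧ p.2.1 ^ 2 * (1 + p.2.2) = ε ^ 2 - p.2.2 ^ 2}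

def figureEight : Set (ℝ × ℝ) :=
  {q | (q.1 - 1) ^ 2 + q.2 ^ 2 = 1 ∨ (q.1 + 1) ^ 2 + q.2 ^ 2 = 1}

noncomputable def linkScaleY (ε z : ℝ) : ℝ := 2 / ε * √((ε - z) * (1 + z) / (ε + |z|))

noncomputable def linkScaleX (ε z : ℝ) : ℝ := 2 / ε * √((1 + z) / (ε + |z|))

/-- The `max` term vanishes for `z ≥ 0` and moves the isolated point `(0, 0, -ε)` to `(5, 0)`;
the `|z|` in `linkScaleY` and `linkScaleX` only keeps their denominators positive off the link,
so that the map is continuous on all of `ℝ³`. -/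
noncomputable def linkToPlane (ε : ℝ) (p : ℝ × ℝ × ℝ) : ℝ × ℝ :=
  (p.2.1 * linkScaleY ε p.2.2 + 5 * max (-p.2.2) 0 / ε, p.1 * linkScaleX ε p.2.2)

theorem isCompact_cartanLink (ε : ℝ) : IsCompact (cartanLink ε) := by
  refine Metric.isCompact_of_isClosed_isBounded ?_ ?_
  · exact (isClosed_eq (by fun_prop) (by fun_prop)).inter (isClosed_eq (by fun_prop) (by fun_prop))
  · refine isBounded_iff_forall_norm_le.mpr ⟨|ε|, ?_⟩
    rintro ⟨x, y, z⟩ ⟨-, h⟩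
    simp only [Prod.norm_def, Real.norm_eq_abs]
    refine max_le (sq_le_sq.mp ?_) (max_le (sq_le_sq.mp ?_) (sq_le_sq.mp ?_)) <;>
      nlinarith [sq_nonneg x, sq_nonneg y, sq_nonneg z]

variable {ε z : ℝ} {p : ℝ × ℝ × ℝ}

theorem continuous_linkToPlane (hε : 0 < ε) : Continuous (linkToPlane ε) := by
  unfold linkToPlane linkScaleY linkScaleX
  fun_prop (disch := intro p; positivity)

theorem mem_figureEight_iff {q : ℝ × ℝ} : q ∈ figureEight ↔ q.1 ^ 2 + q.2 ^ 2 = 2 * |q.1| := by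
  obtain ⟨a, b⟩ := q
  simp only [figureEight, mem_ofPred_eq]
  constructor
  · rintro (h | h)
    · rw [abs_of_nonneg (by nlinarith [sq_nonneg a, sq_nonneg b])]
      linear_combination h
    · rw [abs_of_nonpos (by nlinarith [sq_nonneg a, sq_nonneg b])]
      linear_combination h
  · intro h
    rcases abs_cases a with ⟨ha, -⟩ | ⟨ha, -⟩ <;> rw [ha] at h
    · exact Or.inl (by linear_combination h)
    · exact Or.inr (by linear_combination h)

theorem cartanLink_eq_insert (hε : 0 ≤ ε) :
    cartanLink ε = insert (0, 0, -ε) (cartanLinkCurve ε) := by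
  ext ⟨x, y, z⟩
  simp only [cartanLink, cartanLinkCurve, mem_insert_iff, mem_ofPred_eq, Prod.mk.injEq]
  constructor
  · rintro ⟨hcone, hsphere⟩
    rcases lt_or_ge z 0 with hz | hz
    · have hx : x = 0 := by
        nlinarith [sq_nonneg x, mul_nonpos_of_nonpos_of_nonneg hz.le (sq_nonneg y)]
      have hy : y = 0 := by
        subst hx
        have : z * y ^ 2 = 0 := by linear_combination -hcone
        exact pow_eq_zero_iff two_ne_zero |>.mp ((mul_eq_zero.mp this).resolve_left hz.ne)
      subst hx hy
      exact Or.inl ⟨rfl, rfl, by nlinarith⟩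
    · exact Or.inr ⟨hz, hcone, by linear_combination hsphere - hcone⟩
  · rintro (⟨rfl, rfl, rfl⟩ | ⟨-, hcone, hy⟩)
    · constructor <;> ring
    · exact ⟨hcone, by linear_combination hy + hcone⟩

theorem le_of_mem_cartanLinkCurve (hε : 0 ≤ ε) (hp : p ∈ cartanLinkCurve ε) : p.2.2 ≤ ε := by
  obtain ⟨hz, -, hy⟩ := hp
  nlinarith [mul_nonneg (sq_nonneg p.2.1) (by linarith : (0 : ℝ) ≤ 1 + p.2.2)]

theorem snd_fst_eq_zero_of_mem_cartanLinkCurve (hε : 0 ≤ ε) (hp : p ∈ cartanLinkCurve ε)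
    (hz : p.2.2 = ε) : p.2.1 = 0 := by
  obtain ⟨-, -, hy⟩ := hp
  rw [hz, sub_self] at hy
  have h1ε : 1 + ε ≠ 0 := by positivity
  exact pow_eq_zero_iff two_ne_zero |>.mp ((mul_eq_zero.mp hy).resolve_right h1ε)

theorem sq_linkScaleY (hε : 0 < ε) (hz : 0 ≤ z) (hzε : z ≤ ε) :
    linkScaleY ε z ^ 2 = 4 * (ε - z) * (1 + z) / (ε ^ 2 * (ε + z)) := by
  rw [linkScaleY, abs_of_nonneg hz, mul_pow, Real.sq_sqrt (by positivity)]
  field_simp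
  ring

theorem sq_linkScaleX (hε : 0 < ε) (hz : 0 ≤ z) :
    linkScaleX ε z ^ 2 = 4 * (1 + z) / (ε ^ 2 * (ε + z)) := by
  rw [linkScaleX, abs_of_nonneg hz, mul_pow, Real.sq_sqrt (by positivity)]
  field_simp
  ring

theorem linkScaleY_pos (hε : 0 < ε) (hz : 0 ≤ z) (hzε : z < ε) : 0 < linkScaleY ε z := by
  unfold linkScaleY
  have : 0 < ε - z := sub_pos.mpr hzε
  positivity

theorem linkScaleX_pos (hε : 0 < ε) (hz : 0 ≤ z) : 0 < linkScaleX ε z := by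
  unfold linkScaleX
  positivity

theorem linkToPlane_of_nonneg (hz : 0 ≤ p.2.2) :
    linkToPlane ε p = (p.2.1 * linkScaleY ε p.2.2, p.1 * linkScaleX ε p.2.2) := by
  simp [linkToPlane, hz]

theorem linkToPlane_isolated (hε : 0 < ε) : linkToPlane ε (0, 0, -ε) = (5, 0) := by
  simp [linkToPlane, hε.le, hε.ne']

theorem abs_linkToPlane_fst (hε : 0 < ε) (hp : p ∈ cartanLinkCurve ε) :
    |(linkToPlane ε p).1| = 2 * (ε - p.2.2) / ε := by
  have hzε := le_of_mem_cartanLinkCurve hε.le hp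
  obtain ⟨hz, -, hy⟩ := hp
  rw [← abs_of_nonneg (by positivity : 0 ≤ 2 * (ε - p.2.2) / ε), ← sq_eq_sq_iff_abs_eq_abs,
    linkToPlane_of_nonneg hz, mul_pow, sq_linkScaleY hε hz hzε]
  field_simp
  linear_combination (4 * (ε - p.2.2)) * hy

theorem sq_linkToPlane_snd (hε : 0 < ε) (hp : p ∈ cartanLinkCurve ε) :
    (linkToPlane ε p).2 ^ 2 = 4 * p.2.2 * (ε - p.2.2) / ε ^ 2 := by
  obtain ⟨hz, hx, hy⟩ := hp
  rw [linkToPlane_of_nonneg hz, mul_pow, sq_linkScaleX hε hz, hx]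
  field_simp
  linear_combination p.2.2 * hy

theorem mapsTo_linkToPlane_curve (hε : 0 < ε) :
    MapsTo (linkToPlane ε) (cartanLinkCurve ε) figureEight := by
  intro p hp
  rw [mem_figureEight_iff, ← sq_abs (linkToPlane ε p).1, abs_linkToPlane_fst hε hp,
    sq_linkToPlane_snd hε hp]
  field_simp
  ring

theorem injOn_linkToPlane_curve (hε : 0 < ε) :
    InjOn (linkToPlane ε) (cartanLinkCurve ε) := by
  intro p hp p' hp' h
  have hz : p.2.2 = p'.2.2 := by
    have := abs_linkToPlane_fst hε hp
    rw [h, abs_linkToPlane_fst hε hp', div_left_inj' hε.ne'] at this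
    linarith
  have hz0 : 0 ≤ p.2.2 := hp.1
  rw [linkToPlane_of_nonneg hz0, linkToPlane_of_nonneg hp'.1, ← hz, Prod.mk.injEq] at h
  have hx : p.1 = p'.1 := mul_right_cancel₀ (linkScaleX_pos hε hz0).ne' h.2
  have hy : p.2.1 = p'.2.1 := by
    rcases (le_of_mem_cartanLinkCurve hε.le hp).lt_or_eq with hzε | hzε
    · exact mul_right_cancel₀ (linkScaleY_pos hε hz0 hzε).ne' h.1
    · rw [snd_fst_eq_zero_of_mem_cartanLinkCurve hε.le hp hzε,
        snd_fst_eq_zero_of_mem_cartanLinkCurve hε.le hp' (hz ▸ hzε)]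
  exact Prod.ext hx (Prod.ext hy hz)

theorem surjOn_linkToPlane_curve (hε : 0 < ε) :
    SurjOn (linkToPlane ε) (cartanLinkCurve ε) figureEight := by
  rintro ⟨a, b⟩ hq
  rw [mem_figureEight_iff] at hq
  dsimp only at hq
  obtain ⟨z, hz⟩ : ∃ z, z = ε * (1 - |a| / 2) := ⟨_, rfl⟩
  have ha : |a| = 2 * (ε - z) / ε := by
    rw [hz]
    field_simp
    ring
  have hb : b ^ 2 = 4 * z * (ε - z) / ε ^ 2 := by
    rw [hz]
    field_simp
    linear_combination 4 * hq + 4 * sq_abs a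
  have hz0 : 0 ≤ z := by
    have : |a| ≤ 2 := by nlinarith [sq_abs a, abs_nonneg a, sq_nonneg b]
    rw [hz]
    nlinarith
  have hzε : z ≤ ε := by
    rw [hz]
    nlinarith [abs_nonneg a]
  -- at `z = ε` the factor `linkScaleY` vanishes, so `y` is not recovered by division there
  rcases hzε.lt_or_eq with hzε | rfl
  · have hY := (linkScaleY_pos hε hz0 hzε).ne'
    have hX := (linkScaleX_pos hε hz0).ne'
    refine ⟨(b / linkScaleX ε z, a / linkScaleY ε z, z), ⟨hz0, ?_, ?_⟩, ?_⟩
    · simp only [div_pow, sq_linkScaleX hε hz0, sq_linkScaleY hε hz0 hzε.le, hb, ← sq_abs a, ha]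
      field_simp
      ring
    · simp only [div_pow, sq_linkScaleY hε hz0 hzε.le, ← sq_abs a, ha]
      field_simp
      ring
    · rw [linkToPlane_of_nonneg hz0]
      simp only [div_mul_cancel₀ _ hY, div_mul_cancel₀ _ hX]
  · have ha0 : a = 0 := abs_eq_zero.mp (by rw [ha, sub_self, mul_zero, zero_div])
    have hb0 : b = 0 :=
      pow_eq_zero_iff two_ne_zero |>.mp (by rw [hb, sub_self, mul_zero, zero_div])
    refine ⟨(0, 0, z), ⟨hz0, by ring, by ring⟩, ?_⟩
    rw [linkToPlane_of_nonneg hz0, ha0, hb0, zero_mul, zero_mul]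

theorem image_linkToPlane_curve (hε : 0 < ε) :
    linkToPlane ε '' cartanLinkCurve ε = figureEight :=
  (mapsTo_linkToPlane_curve hε).image_subset.antisymm (surjOn_linkToPlane_curve hε)

theorem five_zero_notMem_figureEight : ((5 : ℝ), (0 : ℝ)) ∉ figureEight := by
  rw [mem_figureEight_iff]
  norm_num

theorem image_linkToPlane_cartanLink (hε : 0 < ε) :
    linkToPlane ε '' cartanLink ε = figureEight ∪ {(5, 0)} := by
  rw [cartanLink_eq_insert hε.le, image_insert_eq, image_linkToPlane_curve hε,
    linkToPlane_isolated hε, union_singleton]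

theorem injOn_linkToPlane_cartanLink (hε : 0 < ε) : InjOn (linkToPlane ε) (cartanLink ε) := by
  have hpt : ((0 : ℝ), (0 : ℝ), -ε) ∉ cartanLinkCurve ε := fun h ↦ by linarith [h.1]
  rw [cartanLink_eq_insert hε.le, injOn_insert hpt, image_linkToPlane_curve hε,
    linkToPlane_isolated hε]
  exact ⟨injOn_linkToPlane_curve hε, five_zero_notMem_figureEight⟩

/-- For every `ε > 0`, the link of the Cartan umbrella at the origin is
homeomorphic to the disjoint union of a figure eight and a point, realized
as `F ∪ {(5,0)} ⊆ ℝ²` where `F` is two unit circles tangent at the origin. -/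
theorem stmt_6 (ε : ℝ) (hε : 0 < ε) :
    Nonempty
      (({p : ℝ × ℝ × ℝ | p.1 ^ 2 = p.2.2 * p.2.1 ^ 2 ∧
          p.1 ^ 2 + p.2.1 ^ 2 + p.2.2 ^ 2 = ε ^ 2} : Set (ℝ × ℝ × ℝ)) ≃ₜ
        (({q : ℝ × ℝ | (q.1 - 1) ^ 2 + q.2 ^ 2 = 1 ∨
          (q.1 + 1) ^ 2 + q.2 ^ 2 = 1} ∪ {((5 : ℝ), (0 : ℝ))}) : Set (ℝ × ℝ))) :=
  ⟨((injOn_linkToPlane_cartanLink hε).homeomorphImageOfIsCompact (isCompact_cartanLink ε)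
    (continuous_linkToPlane hε).continuousOn).trans
    (Homeomorph.setCongr (image_linkToPlane_cartanLink hε))⟩
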